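/- Let c be a real number with 0 < |c| < √2. Then for every pair ε = (ε_η, ε_v) of real-valued Schwartz functions on ℝ one has H_c(ε) = L_c(ε_η) + ∫_ℝ (1−η_c)·(ε_v + c·ε_η/(2·(1−η_c)²))² dx, where H_c(ε) := (1/4)·∫_ℝ (ε_η′)²/(1−η_c) + (1/4)·∫_ℝ (2 − η_c″/(1−η_c)² − (η_c′)²/(1−η_c)³)·ε_η² + ∫_ℝ ((1−η_c)·ε_v² + (c − 2·v_c)·ε_η·ε_v), and L_c(ε_η) := (1/4)·∫_ℝ (ε_η′)²/(1−η_c) + (1/4)·∫_ℝ ((2 − c² − 6·η_c + 3·η_c²)/(1−η_c)²)·ε_η². -/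

import Mathlib

/-!
The profile `η = η_c` solves `η'' = (2 - c²) η - 3 η²` with first integral
`η'² = (2 - c²) η² - 2 η³`, so the potential of `H_c` is that of `L_c` plus `c² / (1 - η)³`.
Since `c - 2 v_c = c / (1 - η)`, completing the square in `ε_v` produces exactly
`(1/4) ∫ c² ε_η² / (1 - η)³`. All integrals converge because `η` takes values in the compact
interval `[0, 1 - c²/2] ⊂ (-∞, 1)`, on which every coefficient is a continuous function of `η`.
-/

open MeasureTheory Real Set SchwartzMap

theorem MeasureTheory.Integrable.continuousOn_comp_mul {α X : Type*} [TopologicalSpace α]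
    [MeasurableSpace α] [OpensMeasurableSpace α] [TopologicalSpace X] {μ : Measure α}
    {f : α → ℝ} (hf : Integrable f μ) {φ : X → ℝ} {s : Set X} (hs : IsCompact s)
    (hφ : ContinuousOn φ s) {η : α → X} (hη : Continuous η) (hηs : ∀ x, η x ∈ s) :
    Integrable (fun x => φ (η x) * f x) μ := by
  obtain ⟨C, hC⟩ := hs.exists_bound_of_continuousOn hφ
  exact hf.bdd_mul (hφ.comp_continuous hη hηs).aestronglyMeasurable
    (ae_of_all _ fun x => hC _ (hηs x))

namespace SchwartzMap

variable {D : Type*} [NormedAddCommGroup D] [NormedSpace ℝ D] [MeasurableSpace D] [BorelSpace D]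
  [SecondCountableTopology D] {μ : Measure D} [μ.HasTemperateGrowth]

theorem integrable_mul (f g : 𝓢(D, ℝ)) : Integrable (fun x => f x * g x) μ :=
  g.integrable.bdd_mul f.continuous.aestronglyMeasurable
    (ae_of_all _ f.toBoundedContinuousFunction.norm_coe_le_norm)

theorem integrable_sq (f : 𝓢(D, ℝ)) : Integrable (fun x => f x ^ 2) μ := by
  simpa only [sq] using f.integrable_mul f

end SchwartzMap

/-- `η_c = solitonProfile √(2 - c²)`. -/
noncomputable def solitonProfile (k x : ℝ) : ℝ := k ^ 2 / (2 * cosh (k * x / 2) ^ 2)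

namespace solitonProfile

section Calculus

variable (k : ℝ)

theorem mem_Icc (x : ℝ) : solitonProfile k x ∈ Icc 0 (k ^ 2 / 2) := by
  have hcosh : 1 ≤ cosh (k * x / 2) ^ 2 := one_le_pow₀ (one_le_cosh _)
  constructor
  · unfold solitonProfile; positivity
  · rw [solitonProfile, div_le_div_iff₀ (by positivity) two_pos]
    nlinarith [sq_nonneg k]

theorem continuous : Continuous (solitonProfile k) :=
  continuous_const.div (by fun_prop) fun x => by positivity

theorem hasDerivAt (x : ℝ) :
    HasDerivAt (solitonProfile k) (-(k ^ 3 / 2) * sinh (k * x / 2) / cosh (k * x / 2) ^ 3) x := by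
  have hc := (cosh_pos (k * x / 2)).ne'
  have h := (hasDerivAt_const x (k ^ 2)).fun_div
    ((((hasDerivAt_id' x).const_mul k).div_const 2).cosh.fun_pow 2 |>.const_mul 2) (by positivity)
  refine h.congr_deriv ?_
  push_cast
  field_simp
  ring

theorem deriv_eq : deriv (solitonProfile k) =
    fun x => -(k ^ 3 / 2) * sinh (k * x / 2) / cosh (k * x / 2) ^ 3 :=
  funext fun x => (hasDerivAt k x).deriv

theorem deriv_sq (x : ℝ) :
    deriv (solitonProfile k) x ^ 2 = k ^ 2 * solitonProfile k x ^ 2 - 2 * solitonProfile k x ^ 3 := by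
  have := (cosh_pos (k * x / 2)).ne'
  rw [deriv_eq, solitonProfile, div_pow, mul_pow, sinh_sq]
  field_simp

theorem deriv_deriv (x : ℝ) :
    deriv (deriv (solitonProfile k)) x = k ^ 2 * solitonProfile k x - 3 * solitonProfile k x ^ 2 := by
  have hc := (cosh_pos (k * x / 2)).ne'
  have hlin := ((hasDerivAt_id' x).const_mul k).div_const 2
  have h := (hlin.sinh.const_mul (-(k ^ 3 / 2))).fun_div (hlin.cosh.fun_pow 3) (pow_ne_zero 3 hc)
  rw [deriv_eq, h.deriv, solitonProfile]
  field_simp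
  linear_combination (3 * k ^ 4 * cosh (k * x / 2) ^ 2) * sinh_sq (k * x / 2)

theorem linearized_potential {c : ℝ} (hk : k ^ 2 = 2 - c ^ 2) (x : ℝ)
    (hx : 1 - solitonProfile k x ≠ 0) :
    2 - deriv (deriv (solitonProfile k)) x / (1 - solitonProfile k x) ^ 2
        - deriv (solitonProfile k) x ^ 2 / (1 - solitonProfile k x) ^ 3
      = (2 - c ^ 2 - 6 * solitonProfile k x + 3 * solitonProfile k x ^ 2)
          / (1 - solitonProfile k x) ^ 2 + c ^ 2 / (1 - solitonProfile k x) ^ 3 := by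
  rw [deriv_deriv, deriv_sq, hk]
  field_simp
  ring

end Calculus

section Integrals

variable {k : ℝ} {μ : Measure ℝ}

theorem one_sub_ne_zero (hk2 : k ^ 2 < 2) (x : ℝ) : 1 - solitonProfile k x ≠ 0 :=
  (sub_pos.2 ((mem_Icc k x).2.trans_lt (by linarith))).ne'

theorem integrable_comp_mul (hk2 : k ^ 2 < 2) {φ : ℝ → ℝ} (hφ : ContinuousOn φ (Iio 1)) {f : ℝ → ℝ}
    (hf : Integrable f μ) : Integrable (fun x => φ (solitonProfile k x) * f x) μ :=
  hf.continuousOn_comp_mul isCompact_Icc (hφ.mono fun t ht => ht.2.trans_lt (by linarith))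
    (continuous k) (mem_Icc k)

theorem integrable_div_pow_mul (hk2 : k ^ 2 < 2) (a : ℝ) (n : ℕ) {f : ℝ → ℝ} (hf : Integrable f μ) :
    Integrable (fun x => a / (1 - solitonProfile k x) ^ n * f x) μ := by
  refine integrable_comp_mul hk2 (φ := fun t => a / (1 - t) ^ n) ?_ hf
  fun_prop (disch := intros; simp_all [ne_of_gt])

variable [μ.HasTemperateGrowth]

theorem integral_potential_mul_sq (hk2 : k ^ 2 < 2) {c : ℝ} (hk : k ^ 2 = 2 - c ^ 2) (f : 𝓢(ℝ, ℝ)) :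
    ∫ x, (2 - deriv (deriv (solitonProfile k)) x / (1 - solitonProfile k x) ^ 2
        - deriv (solitonProfile k) x ^ 2 / (1 - solitonProfile k x) ^ 3) * f x ^ 2 ∂μ
      = (∫ x, (2 - c ^ 2 - 6 * solitonProfile k x + 3 * solitonProfile k x ^ 2)
            / (1 - solitonProfile k x) ^ 2 * f x ^ 2 ∂μ)
        + ∫ x, c ^ 2 / (1 - solitonProfile k x) ^ 3 * f x ^ 2 ∂μ := by
  have hB : Integrable (fun x => (2 - c ^ 2 - 6 * solitonProfile k x
      + 3 * solitonProfile k x ^ 2) / (1 - solitonProfile k x) ^ 2 * f x ^ 2) μ := by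
    refine integrable_comp_mul hk2 (φ := fun t => (2 - c ^ 2 - 6 * t + 3 * t ^ 2) / (1 - t) ^ 2)
      ?_ f.integrable_sq
    fun_prop (disch := intros; simp_all [ne_of_gt])
  rw [← integral_add hB (integrable_div_pow_mul hk2 _ _ f.integrable_sq)]
  refine integral_congr_ae (ae_of_all _ fun x => ?_)
  dsimp only
  rw [linearized_potential k hk x (one_sub_ne_zero hk2 x)]
  ring

theorem integral_mul_add_div_sq (hk2 : k ^ 2 < 2) (c : ℝ) (f g : 𝓢(ℝ, ℝ)) :
    ∫ x, (1 - solitonProfile k x) * (g x + c * f x / (2 * (1 - solitonProfile k x) ^ 2)) ^ 2 ∂μ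
      = (∫ x, ((1 - solitonProfile k x) * g x ^ 2
            + c / (1 - solitonProfile k x) * f x * g x) ∂μ)
        + 1 / 4 * ∫ x, c ^ 2 / (1 - solitonProfile k x) ^ 3 * f x ^ 2 ∂μ := by
  have hC : Integrable (fun x => (1 - solitonProfile k x) * g x ^ 2
      + c / (1 - solitonProfile k x) * f x * g x) μ := by
    refine ((integrable_comp_mul (φ := fun t => 1 - t) hk2 (by fun_prop) g.integrable_sq).add
      (integrable_div_pow_mul hk2 c 1 (f.integrable_mul g))).congr (ae_of_all _ fun x => ?_)
    simp only [Pi.add_apply, pow_one, mul_assoc]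
  rw [← integral_const_mul,
    ← integral_add hC ((integrable_div_pow_mul hk2 _ _ f.integrable_sq).const_mul _)]
  refine integral_congr_ae (ae_of_all _ fun x => ?_)
  have := one_sub_ne_zero hk2 x
  field_simp
  ring

end Integrals

end solitonProfile

/-- Decomposition of the quadratic form `H_c` as
`H_c(ε) = L_c(ε_η) + ∫ (1-η_c)(ε_v + c ε_η/(2(1-η_c)²))²`. -/
theorem Hc_eq_Lc_plus_square (c : ℝ) (hc0 : c ≠ 0) (hc : |c| < Real.sqrt 2)
    (η v : ℝ → ℝ)
    (hη : ∀ x : ℝ, η x =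
      (2 - c ^ 2) / (2 * (Real.cosh (Real.sqrt (2 - c ^ 2) * x / 2)) ^ 2))
    (hv : ∀ x : ℝ, v x = -c * η x / (2 * (1 - η x))) :
    ∀ εη εv : SchwartzMap ℝ ℝ,
      (1 / 4) * (∫ x : ℝ, (deriv (⇑εη) x) ^ 2 / (1 - η x))
        + (1 / 4) * (∫ x : ℝ,
            (2 - deriv (deriv η) x / (1 - η x) ^ 2 - (deriv η x) ^ 2 / (1 - η x) ^ 3)
              * (εη x) ^ 2)
        + (∫ x : ℝ, ((1 - η x) * (εv x) ^ 2 + (c - 2 * v x) * εη x * εv x))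
      = (1 / 4) * (∫ x : ℝ, (deriv (⇑εη) x) ^ 2 / (1 - η x))
          + (1 / 4) * (∫ x : ℝ,
              ((2 - c ^ 2 - 6 * η x + 3 * (η x) ^ 2) / (1 - η x) ^ 2) * (εη x) ^ 2)
          + (∫ x : ℝ, (1 - η x) * (εv x + c * εη x / (2 * (1 - η x) ^ 2)) ^ 2) := by
  intro εη εv
  have hc2 : c ^ 2 < 2 := by
    simpa [sq_abs] using pow_lt_pow_left₀ hc (abs_nonneg c) two_ne_zero
  obtain ⟨k, hk, rfl⟩ : ∃ k, k ^ 2 = 2 - c ^ 2 ∧ η = solitonProfile k :=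
    ⟨√(2 - c ^ 2), sq_sqrt (by linarith),
      funext fun x => by rw [hη, solitonProfile, sq_sqrt (by linarith)]⟩
  have hk2 : k ^ 2 < 2 := by nlinarith [pow_pos (abs_pos.2 hc0) 2, sq_abs c]
  have hcross x : c - 2 * v x = c / (1 - solitonProfile k x) := by
    rw [hv x]
    field_simp [solitonProfile.one_sub_ne_zero hk2 x]
    ring
  simp_rw [hcross, solitonProfile.integral_potential_mul_sq hk2 hk,
    solitonProfile.integral_mul_add_div_sq hk2]
  ring
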